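/- Let T > 0, α ∈ (−1,0), and let f : [0,∞) → [0,∞) be measurable with ∫_0^δ f(u) du < ∞ for every δ > 0, such that 0 ≤ f(u) ≤ c u^α for all u ∈ (0,T] and some constant c > 0. Then there exists a constant M > 0 (depending on f, α, T) such that D_f(s,t) ≤ M |t−s| for all s, t ∈ [0,T]. (By Gaussianity this gives E|ζ_t − ζ_s|^p ≤ C_p |t−s|^{p/2} for every p ≥ 1 and Hölder continuous paths of any index δ < 1/2.) -/
import Mathlib


open MeasureTheory Real Filter

/-- The kernel `K_f(s,t)`, with `x * log x = 0` at `x = 0` (automatic since `Real.log 0 = 0`). -/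
noncomputable def Kf (f : ℝ → ℝ) (s t : ℝ) : ℝ :=
  2 * ∫ u in (0:ℝ)..(min s t),
    f u * ((s + t - 2*u) * Real.log (s + t - 2*u)
      - (s - u) * Real.log (s - u) - (t - u) * Real.log (t - u))

/-- The increment functional `D_f(s,t) = K_f(t,t) - 2 K_f(s,t) + K_f(s,s)`,
equal to `E (ζ_t - ζ_s)^2` for a centered process with covariance `K_f`. -/
noncomputable def Df (f : ℝ → ℝ) (s t : ℝ) : ℝ :=
  Kf f t t - 2 * Kf f s t + Kf f s s

/-- Auxiliary kernel integrand. -/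
noncomputable def gk (S U u : ℝ) : ℝ :=
  (S + U - 2*u) * Real.log (S + U - 2*u)
    - (S - u) * Real.log (S - u) - (U - u) * Real.log (U - u)

lemma gk_cont (S U : ℝ) : Continuous (gk S U) := by
  unfold gk
  have h := Real.continuous_mul_log
  have c1 : Continuous fun u : ℝ => S + U - 2*u := by continuity
  have c2 : Continuous fun u : ℝ => S - u := by continuity
  have c3 : Continuous fun u : ℝ => U - u := by continuity
  exact ((h.comp c1).sub (h.comp c2)).sub (h.comp c3)

lemma Kf_symm (f : ℝ → ℝ) (s t : ℝ) : Kf f s t = Kf f t s := by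
  unfold Kf
  rw [min_comm]
  congr 1
  rw [show s + t = t + s from add_comm s t]
  apply intervalIntegral.integral_congr
  intro u _
  ring

lemma log_two_le_one : Real.log 2 ≤ 1 := by
  have := Real.log_le_sub_one_of_pos (show (0:ℝ) < 2 by norm_num)
  linarith

/-- Key entropy-type inequality: `(a+b) log 2 - ((a+b)log(a+b) - a log a - b log b) ≤ b - a`. -/
lemma lemA {a b : ℝ} (ha : 0 ≤ a) (hab : a ≤ b) (hb : 0 < b) :
    (a + b) * Real.log 2 - ((a + b) * Real.log (a + b)
      - a * Real.log a - b * Real.log b) ≤ b - a := by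
  have hab' : 0 < a + b := by linarith
  have hlog2 := log_two_le_one
  rcases eq_or_lt_of_le ha with h0 | ha'
  · have ha0 : a = 0 := h0.symm
    subst ha0
    simp only [zero_add, zero_mul, sub_zero]
    nlinarith [mul_le_mul_of_nonneg_left hlog2 hb.le]
  · have k1 : Real.log 2 + Real.log a - Real.log (a + b) ≤ 0 := by
      have h2a : Real.log (2*a) ≤ Real.log (a + b) :=
        Real.log_le_log (by positivity) (by linarith)
      rw [Real.log_mul two_ne_zero (ne_of_gt ha')] at h2a
      linarith
    have k1' : a * (Real.log 2 + Real.log a - Real.log (a + b)) ≤ 0 := by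
      have := mul_le_mul_of_nonneg_left k1 ha
      simpa using this
    have k2 : b * (Real.log 2 + Real.log b - Real.log (a + b)) ≤ b - a := by
      have h2b : Real.log (2*b/(a+b)) ≤ 2*b/(a+b) - 1 :=
        Real.log_le_sub_one_of_pos (by positivity)
      rw [Real.log_div (by positivity) (ne_of_gt hab'),
        Real.log_mul two_ne_zero (ne_of_gt hb)] at h2b
      have e : 2*b/(a+b) - 1 = (b - a)/(a + b) := by
        field_simp
        ring
      rw [e] at h2b
      have step : b * ((b - a)/(a + b)) ≤ b - a := by
        calc b * ((b - a)/(a + b)) ≤ (a + b) * ((b - a)/(a + b)) :=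
              mul_le_mul_of_nonneg_right (by linarith)
                (div_nonneg (by linarith) (by linarith))
          _ = b - a := by field_simp
      calc b * (Real.log 2 + Real.log b - Real.log (a + b))
          ≤ b * ((b - a)/(a + b)) := mul_le_mul_of_nonneg_left h2b hb.le
        _ ≤ b - a := step
    nlinarith [k1', k2]

/-- Pointwise bound on the diagonal kernel. -/
lemma gk_tt {s t u : ℝ} (hsu : s ≤ u) (hut : u ≤ t) :
    gk t t u ≤ 2 * Real.log 2 * (t - s) := by
  have hlog2 : 0 < Real.log 2 := Real.log_pos one_lt_two
  rcases eq_or_lt_of_le hut with h | h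
  · subst h
    unfold gk
    simp only [sub_self, zero_mul, sub_zero]
    have : u + u - 2*u = 0 := by ring
    rw [this]
    simp only [zero_mul]
    nlinarith [mul_nonneg hlog2.le (sub_nonneg.2 hsu)]
  · unfold gk
    have hb : 0 < t - u := by linarith
    have e1 : t + t - 2*u = 2*(t - u) := by ring
    rw [e1, Real.log_mul two_ne_zero (ne_of_gt hb)]
    have : 2*(t-u) * (Real.log 2 + Real.log (t-u)) - (t-u)*Real.log (t-u)
        - (t-u)*Real.log (t-u) = 2*Real.log 2*(t-u) := by ring
    rw [this]
    have : t - u ≤ t - s := by linarith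
    nlinarith [hlog2, this]

/-- Pointwise combined bound: `2 gk t t - 4 gk s t + 2 gk s s ≤ 4 (t-s)` on `[0,s]`, `s < t`. -/
lemma combo {s t u : ℝ} (hu : 0 ≤ u) (hus : u ≤ s) (hst : s < t) :
    2 * gk t t u - 4 * gk s t u + 2 * gk s s u ≤ 4 * (t - s) := by
  have ha : 0 ≤ s - u := by linarith
  have hb : 0 < t - u := by linarith
  have hab : s - u ≤ t - u := by linarith
  unfold gk
  have e1 : t + t - 2*u = 2*(t - u) := by ring
  have e2 : s + t - 2*u = (s - u) + (t - u) := by ring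
  have e3 : s + s - 2*u = 2*(s - u) := by ring
  rw [e1, e2, e3, Real.log_mul two_ne_zero (ne_of_gt hb)]
  have key := lemA ha hab hb
  rcases eq_or_lt_of_le ha with h0 | ha'
  · have : s - u = 0 := h0.symm
    rw [this]
    simp only [zero_add, mul_zero, zero_mul, sub_zero, Real.log_zero]
    nlinarith [mul_le_mul_of_nonneg_left log_two_le_one hb.le, this]
  · rw [Real.log_mul two_ne_zero (ne_of_gt ha')]
    nlinarith [key]

theorem stmt_13 (T : ℝ) (hT : 0 < T) (α : ℝ) (hα : α ∈ Set.Ioo (-1 : ℝ) 0)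
    (f : ℝ → ℝ) (hf_meas : Measurable f)
    (hf_nonneg : ∀ u, 0 ≤ u → 0 ≤ f u)
    (hf_int : ∀ δ : ℝ, 0 < δ → IntervalIntegrable f volume 0 δ)
    (c : ℝ) (hc : 0 < c) (hbound : ∀ u ∈ Set.Ioc (0:ℝ) T, f u ≤ c * u ^ α) :
    ∃ M : ℝ, 0 < M ∧ ∀ s ∈ Set.Icc (0:ℝ) T, ∀ t ∈ Set.Icc (0:ℝ) T,
      Df f s t ≤ M * |t - s| := by
  have hlog2 : 0 < Real.log 2 := Real.log_pos one_lt_two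
  set I : ℝ := ∫ u in (0:ℝ)..T, f u with hIdef
  have hI0 : 0 ≤ I := intervalIntegral.integral_nonneg hT.le fun u hu => hf_nonneg u hu.1
  set M : ℝ := (4 * Real.log 2 + 4) * I + 1 with hMdef
  have hM : 0 < M := by nlinarith [hI0, hlog2]
  have hfT := hf_int T hT
  have hfsub : ∀ a b : ℝ, 0 ≤ a → a ≤ b → b ≤ T → IntervalIntegrable f volume a b := by
    intro a b h1 h2 h3
    refine hfT.mono_set ?_
    rw [Set.uIcc_of_le h2, Set.uIcc_of_le hT.le]
    exact Set.Icc_subset_Icc h1 h3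
  have key : ∀ s ∈ Set.Icc (0:ℝ) T, ∀ t ∈ Set.Icc (0:ℝ) T, s ≤ t →
      Df f s t ≤ M * (t - s) := by
    intro s hs t ht hst
    rcases eq_or_lt_of_le hst with h | hst'
    · subst h
      simp only [Df, sub_self, mul_zero]
      linarith
    obtain ⟨hs0, hsT⟩ := hs
    obtain ⟨ht0, htT⟩ := ht
    have ig : ∀ S U a b : ℝ, 0 ≤ a → a ≤ b → b ≤ T →
        IntervalIntegrable (fun u => f u * gk S U u) volume a b := by
      intro S U a b h1 h2 h3
      exact (hfsub a b h1 h2 h3).mul_continuousOn (gk_cont S U).continuousOn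
    have hA := ig t t 0 s le_rfl hs0 hsT
    have hB := ig t t s t hs0 hst htT
    have hC := ig s t 0 s le_rfl hs0 hsT
    have hE := ig s s 0 s le_rfl hs0 hsT
    have e1 : Kf f t t = 2 * ∫ u in (0:ℝ)..t, f u * gk t t u := by
      unfold Kf gk; rw [min_self]
    have e2 : Kf f s t = 2 * ∫ u in (0:ℝ)..s, f u * gk s t u := by
      unfold Kf gk; rw [min_eq_left hst]
    have e3 : Kf f s s = 2 * ∫ u in (0:ℝ)..s, f u * gk s s u := by
      unfold Kf gk; rw [min_self]
    have hsplit : (∫ u in (0:ℝ)..t, f u * gk t t u)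
        = (∫ u in (0:ℝ)..s, f u * gk t t u) + ∫ u in s..t, f u * gk t t u :=
      (intervalIntegral.integral_add_adjacent_intervals hA hB).symm
    -- combined integral over [0,s]
    have hGeq : ∀ u : ℝ, f u * (2 * gk t t u - 4 * gk s t u + 2 * gk s s u)
        = 2*(f u * gk t t u) - 4*(f u * gk s t u) + 2*(f u * gk s s u) := by
      intro u; ring
    have hGint : IntervalIntegrable
        (fun u => f u * (2 * gk t t u - 4 * gk s t u + 2 * gk s s u)) volume 0 s := by
      simp only [hGeq]
      exact ((hA.const_mul 2).sub (hC.const_mul 4)).add (hE.const_mul 2)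
    have hComb : 2*(∫ u in (0:ℝ)..s, f u * gk t t u)
        - 4*(∫ u in (0:ℝ)..s, f u * gk s t u)
        + 2*(∫ u in (0:ℝ)..s, f u * gk s s u)
        = ∫ u in (0:ℝ)..s, f u * (2 * gk t t u - 4 * gk s t u + 2 * gk s s u) := by
      simp only [hGeq]
      rw [intervalIntegral.integral_add ((hA.const_mul 2).sub (hC.const_mul 4))
          (hE.const_mul 2),
        intervalIntegral.integral_sub (hA.const_mul 2) (hC.const_mul 4),
        intervalIntegral.integral_const_mul, intervalIntegral.integral_const_mul,
        intervalIntegral.integral_const_mul]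
    have hmono1 : (∫ u in (0:ℝ)..s, f u * (2 * gk t t u - 4 * gk s t u + 2 * gk s s u))
        ≤ ∫ u in (0:ℝ)..s, f u * (4 * (t - s)) := by
      apply intervalIntegral.integral_mono_on hs0 hGint
        ((hfsub 0 s le_rfl hs0 hsT).mul_const _)
      intro u hu
      exact mul_le_mul_of_nonneg_left (combo hu.1 hu.2 hst') (hf_nonneg u hu.1)
    have hmono2 : (∫ u in s..t, f u * gk t t u)
        ≤ ∫ u in s..t, f u * (2 * Real.log 2 * (t - s)) := by
      apply intervalIntegral.integral_mono_on hst hB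
        ((hfsub s t hs0 hst htT).mul_const _)
      intro u hu
      exact mul_le_mul_of_nonneg_left (gk_tt hu.1 hu.2)
        (hf_nonneg u (le_trans hs0 hu.1))
    have hval1 : (∫ u in (0:ℝ)..s, f u * (4 * (t - s)))
        = (∫ u in (0:ℝ)..s, f u) * (4 * (t - s)) :=
      intervalIntegral.integral_mul_const _ _
    have hval2 : (∫ u in s..t, f u * (2 * Real.log 2 * (t - s)))
        = (∫ u in s..t, f u) * (2 * Real.log 2 * (t - s)) :=
      intervalIntegral.integral_mul_const _ _
    -- comparison of partial integrals of f with I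
    have hsp1 : (∫ u in (0:ℝ)..s, f u) + ∫ u in s..T, f u = I :=
      intervalIntegral.integral_add_adjacent_intervals
        (hfsub 0 s le_rfl hs0 hsT) (hfsub s T hs0 hsT le_rfl)
    have hsp2 : (∫ u in s..t, f u) + ∫ u in t..T, f u = ∫ u in s..T, f u :=
      intervalIntegral.integral_add_adjacent_intervals
        (hfsub s t hs0 hst htT) (hfsub t T ht0 htT le_rfl)
    have n1 : 0 ≤ ∫ u in (0:ℝ)..s, f u :=
      intervalIntegral.integral_nonneg hs0 fun u hu => hf_nonneg u hu.1
    have n2 : 0 ≤ ∫ u in s..t, f u :=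
      intervalIntegral.integral_nonneg hst fun u hu => hf_nonneg u (le_trans hs0 hu.1)
    have n3 : 0 ≤ ∫ u in t..T, f u :=
      intervalIntegral.integral_nonneg htT fun u hu => hf_nonneg u (le_trans ht0 hu.1)
    have hle1 : (∫ u in (0:ℝ)..s, f u) ≤ I := by linarith
    have hle2 : (∫ u in s..t, f u) ≤ I := by linarith
    -- put it together
    have hDf : Df f s t
        = (2*(∫ u in (0:ℝ)..s, f u * gk t t u)
            - 4*(∫ u in (0:ℝ)..s, f u * gk s t u)
            + 2*(∫ u in (0:ℝ)..s, f u * gk s s u))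
          + 2 * ∫ u in s..t, f u * gk t t u := by
      rw [Df, e1, e2, e3, hsplit]; ring
    rw [hDf, hComb]
    have m1 : (∫ u in (0:ℝ)..s, f u) * (4 * (t - s)) ≤ I * (4 * (t - s)) :=
      mul_le_mul_of_nonneg_right hle1 (by linarith)
    have m2 : (∫ u in s..t, f u) * (2 * Real.log 2 * (t - s))
        ≤ I * (2 * Real.log 2 * (t - s)) :=
      mul_le_mul_of_nonneg_right hle2 (by nlinarith [hlog2])
    have hts : 0 ≤ t - s := by linarith
    calc (∫ u in (0:ℝ)..s, f u * (2 * gk t t u - 4 * gk s t u + 2 * gk s s u))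
          + 2 * ∫ u in s..t, f u * gk t t u
        ≤ (∫ u in (0:ℝ)..s, f u) * (4 * (t - s))
          + 2 * ((∫ u in s..t, f u) * (2 * Real.log 2 * (t - s))) := by
          rw [← hval1, ← hval2]; linarith [hmono1, hmono2]
      _ ≤ I * (4 * (t - s)) + 2 * (I * (2 * Real.log 2 * (t - s))) := by linarith
      _ ≤ M * (t - s) := by rw [hMdef]; nlinarith [hts]
  refine ⟨M, hM, ?_⟩
  intro s hs t ht
  rcases le_total s t with h | h
  · rw [abs_of_nonneg (sub_nonneg.2 h)]
    exact key s hs t ht h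
  · rw [abs_of_nonpos (sub_nonpos.2 h),
      show Df f s t = Df f t s from by unfold Df; rw [Kf_symm f s t]; ring, neg_sub]
    exact key t ht s hs h
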